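/- For all k, l > 0 and all T > 0, \sup_{(x,t) \in (0,\pi/2) \times (0,T)} |u_k(x,t) - u_l(x,t)| \leq \sup_{(x,t) \in (0,\pi/2) \times (0,T)} |f_k(x,t) - f_l(x,t)| + \sup_{t \in (0,T)} |d_k(t) - d_l(t)|, where u_k(x,t) = k \sin t \sin x, f_k(x,t) = \sqrt{2} k \sin x \cos(t-\pi/4), and d_k(t) = k \sin t. -/

import Mathlib

/-! Since `|sin x| ≤ 1`, `|u_k - u_l|` is bounded pointwise by `|d_k - d_l|`; the in-domain
term only adds a nonnegative supremum. -/

open Real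

/-- Unlike `csSup_le_csSup`, this needs no nonemptiness of `A`, since `sSup ∅ = 0` in `ℝ`. -/
theorem Real.sSup_le_sSup_of_forall_exists_le {A C : Set ℝ} (hC : BddAbove C)
    (hC₀ : ∀ z ∈ C, 0 ≤ z) (h : ∀ y ∈ A, ∃ z ∈ C, y ≤ z) : sSup A ≤ sSup C :=
  Real.sSup_le (fun y hy ↦ let ⟨_, hz, hyz⟩ := h y hy; hyz.trans (le_csSup hC hz))
    (Real.sSup_nonneg hC₀)

theorem abs_mul_sub_mul_le_of_abs_le_one (a b : ℝ) {c : ℝ} (hc : |c| ≤ 1) :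
    |a * c - b * c| ≤ |a - b| := by
  rw [← sub_mul, abs_mul]
  exact mul_le_of_le_one_right (abs_nonneg _) hc

theorem bddAbove_abs_mul_sin_sub_mul_sin (k l : ℝ) (S : Set ℝ) :
    BddAbove {y : ℝ | ∃ t ∈ S, y = |k * sin t - l * sin t|} :=
  ⟨|k - l|, by
    rintro _ ⟨t, -, rfl⟩
    exact abs_mul_sub_mul_le_of_abs_le_one k l (abs_sin_le_one t)⟩

theorem stmt2_general (k l T : ℝ) :
    sSup {y : ℝ | ∃ x ∈ Set.Ioo (0 : ℝ) (π / 2), ∃ t ∈ Set.Ioo (0 : ℝ) T,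
        y = |k * Real.sin t * Real.sin x - l * Real.sin t * Real.sin x|}
      ≤ sSup {y : ℝ | ∃ x ∈ Set.Ioo (0 : ℝ) (π / 2), ∃ t ∈ Set.Ioo (0 : ℝ) T,
          y = |Real.sqrt 2 * k * Real.sin x * Real.cos (t - π / 4)
                - Real.sqrt 2 * l * Real.sin x * Real.cos (t - π / 4)|}
        + sSup {y : ℝ | ∃ t ∈ Set.Ioo (0 : ℝ) T, y = |k * Real.sin t - l * Real.sin t|} := by
  refine (Real.sSup_le_sSup_of_forall_exists_le
    (bddAbove_abs_mul_sin_sub_mul_sin k l _) ?_ ?_).trans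
      (le_add_of_nonneg_left (Real.sSup_nonneg ?_))
  · rintro _ ⟨t, -, rfl⟩
    exact abs_nonneg _
  · rintro _ ⟨x, -, t, ht, rfl⟩
    exact ⟨_, ⟨t, ht, rfl⟩, abs_mul_sub_mul_le_of_abs_le_one _ _ (abs_sin_le_one x)⟩
  · rintro _ ⟨x, -, t, -, rfl⟩
    exact abs_nonneg _

/-- RLES estimate for the explicit family `u_k(x,t) = k sin t sin x`,
`f_k(x,t) = √2 k sin x cos(t-π/4)`, `d_k(t) = k sin t`:
`sup |u_k - u_l| ≤ sup |f_k - f_l| + sup |d_k - d_l|` over `(0,π/2)×(0,T)`. -/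
theorem stmt2 (k l T : ℝ) (hk : 0 < k) (hl : 0 < l) (hT : 0 < T) :
    sSup {y : ℝ | ∃ x ∈ Set.Ioo (0 : ℝ) (π / 2), ∃ t ∈ Set.Ioo (0 : ℝ) T,
        y = |k * Real.sin t * Real.sin x - l * Real.sin t * Real.sin x|}
      ≤ sSup {y : ℝ | ∃ x ∈ Set.Ioo (0 : ℝ) (π / 2), ∃ t ∈ Set.Ioo (0 : ℝ) T,
          y = |Real.sqrt 2 * k * Real.sin x * Real.cos (t - π / 4)
                - Real.sqrt 2 * l * Real.sin x * Real.cos (t - π / 4)|}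
        + sSup {y : ℝ | ∃ t ∈ Set.Ioo (0 : ℝ) T, y = |k * Real.sin t - l * Real.sin t|} :=
  stmt2_general k l T
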